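/- arXiv:1706.02733 — 2 statements merged into one kernel-verified Lean document; each statement's English description precedes it below -/
import Mathlib

section
/- With parameter settings δ = β/(kn), ε = (log(k/β)·√(log(1/δ))/n)^{3/5}, σ = √(log(1/δ))/(εn), λ = 4 log(4k/β)σ, and B ≤ 4/λ, the quantity 18ε√B + λ + 2log(4k/β)σ is bounded by C · log(k/β)^{2/5} · log(kn/β)^{1/5} / n^{2/5} for an absolute constant C > 0, for all n, k ≥ 2 and β ∈ (0,1). -/
/-!
Put `a = log(k/β) · √(log(kn/β)) / n` and `R = a^{2/5}`, the claimed rate. The parameters are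
chosen so that `ε = a^{3/5} = R^{3/2}` and `log(k/β) · σ = a / ε = R`. Since `log(4k/β)` lies
between `log(k/β)` and `3 log(k/β)`, the terms `λ + 2 log(4k/β) σ` are at most `18 R`, and
`B ≤ 4/λ ≤ 1/R` gives `ε √B ≤ R^{3/2} / √R = R`.
-/

open Real

lemma log_four_mul_le_three_mul_log {t : ℝ} (ht : 2 ≤ t) : log (4 * t) ≤ 3 * log t := by
  have h4 : log 4 = 2 * log 2 := by
    rw [show (4 : ℝ) = 2 ^ 2 by norm_num, log_pow]; push_cast; ring
  have h2 : log 2 ≤ log t := log_le_log (by norm_num) ht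
  rw [log_mul (by norm_num) (by linarith)]
  linarith

lemma balanced_error_le {ε σ x L B R : ℝ} (hR : 0 < R) (hε : 0 ≤ ε) (hεR : ε ^ 2 = R ^ 3)
    (hxσ : x * σ = R) (hxL : x ≤ L) (hLx : L ≤ 3 * x)
    (hBlam : B ≤ 4 / (4 * L * σ)) :
    18 * ε * √B + 4 * L * σ + 2 * L * σ ≤ 36 * R := by
  have hσ : 0 < σ := pos_of_mul_pos_right (hxσ ▸ hR) (by linarith)
  have hLσ : R ≤ L * σ := hxσ ▸ mul_le_mul_of_nonneg_right hxL hσ.le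
  have hL : 0 < L := pos_of_mul_pos_left (hR.trans_le hLσ) hσ.le
  have hBR : B * R ≤ 1 := by
    calc B * R ≤ 4 / (4 * L * σ) * (L * σ) := mul_le_mul hBlam hLσ hR.le (by positivity)
      _ = 1 := by field_simp
  have hεB : ε * √B ≤ R := by
    rw [← sqrt_sq hε, ← sqrt_mul (sq_nonneg ε), hεR]
    refine sqrt_le_iff.mpr ⟨hR.le, ?_⟩
    nlinarith
  have hLσ3 : L * σ ≤ 3 * R := hxσ ▸ (mul_assoc 3 x σ ▸ mul_le_mul_of_nonneg_right hLx hσ.le)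
  linarith

lemma rpow_two_fifths_mul_sqrt_div {x y m : ℝ} (hx : 0 ≤ x) (hy : 0 ≤ y) (hm : 0 ≤ m) :
    (x * √y / m) ^ ((2 : ℝ) / 5) = x ^ ((2 : ℝ) / 5) * y ^ ((1 : ℝ) / 5) / m ^ ((2 : ℝ) / 5) := by
  rw [div_rpow (by positivity) hm, mul_rpow hx (sqrt_nonneg y), sqrt_eq_rpow, ← rpow_mul hy]
  norm_num

/-- The parameter-balancing calculation in the Shaky Ladder upper bound: with
`δ = β/(kn)`, `ε = (log(k/β)·√(log(1/δ))/n)^{3/5}`, `σ = √(log(1/δ))/(εn)`,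
`λ = 4 log(4k/β) σ` and `B ≤ 4/λ`, the error expression
`18ε√B + λ + 2 log(4k/β) σ` is at most
`C · log(k/β)^{2/5} · log(kn/β)^{1/5} / n^{2/5}` for an absolute constant `C`. -/
theorem shaky_ladder_parameter_bound :
    ∃ C : ℝ, 0 < C ∧ ∀ (n k : ℕ), 2 ≤ n → 2 ≤ k → ∀ β : ℝ, 0 < β → β < 1 →
      let δ : ℝ := β / ((k : ℝ) * n)
      let ε : ℝ := (Real.log ((k : ℝ) / β) * Real.sqrt (Real.log (1 / δ)) / n) ^ ((3 : ℝ) / 5)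
      let σ : ℝ := Real.sqrt (Real.log (1 / δ)) / (ε * n)
      let lam : ℝ := 4 * Real.log (4 * (k : ℝ) / β) * σ
      ∀ B : ℝ, 0 ≤ B → B ≤ 4 / lam →
        18 * ε * Real.sqrt B + lam + 2 * Real.log (4 * (k : ℝ) / β) * σ ≤
          C * Real.log ((k : ℝ) / β) ^ ((2 : ℝ) / 5) *
            Real.log ((k : ℝ) * n / β) ^ ((1 : ℝ) / 5) / (n : ℝ) ^ ((2 : ℝ) / 5) := by
  refine ⟨36, by norm_num, fun n k hn hk β hβ hβ1 => ?_⟩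
  intro δ ε σ lam B _ hBlam
  set x := log ((k : ℝ) / β)
  set y := log ((k : ℝ) * n / β)
  have hn0 : (0 : ℝ) < n := by positivity
  have hkβ : 2 ≤ (k : ℝ) / β := by
    rw [le_div_iff₀ hβ]; nlinarith [(Nat.ofNat_le_cast.mpr hk : (2 : ℝ) ≤ k)]
  have hx : 0 < x := log_pos (by linarith)
  have hy : 0 < y := log_pos (by
    rw [lt_div_iff₀ hβ]; nlinarith [(Nat.ofNat_le_cast.mpr hk : (2 : ℝ) ≤ k),
      (Nat.ofNat_le_cast.mpr hn : (2 : ℝ) ≤ n)])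
  have hδ : log (1 / δ) = y := by simp only [δ, y, one_div_div]
  set a := x * √y / n
  have ha : 0 < a := by positivity
  have hε : ε = a ^ ((3 : ℝ) / 5) := by simp only [ε, hδ]; rfl
  have hσ : x * σ = a ^ ((2 : ℝ) / 5) := by
    simp only [σ, hδ, hε]
    rw [show (2 : ℝ) / 5 = 1 - 3 / 5 by norm_num, rpow_sub ha, rpow_one]
    field_simp
    exact (mul_div_cancel₀ _ hn0.ne').symm
  have hεR : ε ^ 2 = (a ^ ((2 : ℝ) / 5)) ^ 3 := by
    rw [hε, ← rpow_mul_natCast ha.le, ← rpow_mul_natCast ha.le]; norm_num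
  have hfour : 4 * (k : ℝ) / β = 4 * ((k : ℝ) / β) := mul_div_assoc _ _ _
  have hxL : x ≤ log (4 * (k : ℝ) / β) := log_le_log (by positivity) (by rw [hfour]; linarith)
  have hLx : log (4 * (k : ℝ) / β) ≤ 3 * x := hfour ▸ log_four_mul_le_three_mul_log hkβ
  have key := balanced_error_le (by positivity) (hε ▸ by positivity) hεR hσ hxL hLx hBlam
  rw [rpow_two_fifths_mul_sqrt_div hx.le hy.le hn0.le] at key
  exact key.trans_eq (by ring)
end

section
/- Let x₁,…,x_k be real numbers and R₁,…,R_k, r₁,…,r_k reals with |R_t − x_t| ≤ E for all t. Define the leaderboard error lberr = max_{1≤t≤k} |min_{1≤i≤t} x_i − R_t|. If for each t either R_t = R_{t-1} (with R₀ = 1) or R_t = x_t + e_t with |e_t| ≤ E, and R_t ≤ min_{i≤t} x_i + E whenever R_t is not updated because x_t + e'_t ≥ R_{t-1} − λ + e''_t with |e'_t|, |e''_t| ≤ L, then lberr ≤ E + λ + 2L. -/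
/-!
Compare the estimates with the running minimum `m t = min (m (t-1)) (x t)`, started at
`m 0 = 1 = R 0`; since every risk is at most `1`, it agrees with `min_{1 ≤ i ≤ t} x i`.
The invariant `|m t - R t| ≤ E + λ + 2L` then survives each step. On an update, `R t` is
within `E + L` of `x t`, and the successful comparison makes it drop by at least
`λ - 3L ≥ 0` below `R (t-1)`, hence stays under `m (t-1) + E + λ + 2L`. Without an
update, `R t = R (t-1)`, and the failed comparison bounds it by `x t + E + λ + 2L`.
-/

namespace ShakyLadder

/-- One round of the ladder: `R'` is the previous estimate, `r` the empirical risk of the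
new model. -/
def Step (L lam r R' R : ℝ) : Prop :=
  (∃ e e' e'', |e| ≤ L ∧ |e'| ≤ L ∧ |e''| ≤ L ∧ r + e < R' - lam + e' ∧ R = r + e'') ∨
    (R = R' ∧ ∃ e e', |e| ≤ L ∧ |e'| ≤ L ∧ R' - lam + e' ≤ r + e)

theorem Step.abs_min_sub_le {E L lam r x m R' R : ℝ} (hstep : Step L lam r R' R)
    (hr : |r - x| ≤ E) (hLlam : 3 * L ≤ lam) (hm : |m - R'| ≤ E + lam + 2 * L) :
    |min m x - R| ≤ E + lam + 2 * L := by
  rw [abs_le] at hr hm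
  rw [abs_sub_le_iff, sub_le_iff_le_add', sub_le_comm]
  rcases hstep with ⟨e, e', e'', he, he', he'', hcmp, rfl⟩ | ⟨rfl, e, e', he, he', hcmp⟩
  · rw [abs_le] at he he' he''
    exact ⟨(min_le_right m x).trans (by linarith), le_min (by linarith) (by linarith)⟩
  · rw [abs_le] at he he'
    exact ⟨(min_le_left m x).trans (by linarith), le_min (by linarith) (by linarith)⟩

def runningMin (a : ℝ) (x : ℕ → ℝ) : ℕ → ℝ
  | 0 => a
  | t + 1 => min (runningMin a x t) (x (t + 1))

theorem inf'_Icc_one_eq_runningMin {a : ℝ} {x : ℕ → ℝ} (hxa : ∀ i, x i ≤ a) {t : ℕ}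
    (ht : 1 ≤ t) : (Finset.Icc 1 t).inf' (Finset.nonempty_Icc.mpr ht) x = runningMin a x t := by
  induction t, ht using Nat.le_induction with
  | base => simp [runningMin, hxa 1]
  | succ t ht ih =>
    rw [runningMin, ← ih, min_comm]
    exact (Finset.inf'_congr _ (Finset.insert_Icc_right_eq_Icc_add_one (by omega)).symm
      fun _ _ => rfl).trans (Finset.inf'_insert _ x)

theorem abs_runningMin_sub_le {k : ℕ} {E L lam a : ℝ} {x r R : ℕ → ℝ}
    (hD : 0 ≤ E + lam + 2 * L) (hLlam : 3 * L ≤ lam) (hR0 : R 0 = a)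
    (hemp : ∀ t, 1 ≤ t → t ≤ k → |r t - x t| ≤ E)
    (hstep : ∀ t, 1 ≤ t → t ≤ k → Step L lam (r t) (R (t - 1)) (R t)) :
    ∀ t ≤ k, |runningMin a x t - R t| ≤ E + lam + 2 * L
  | 0, _ => by simpa [runningMin, hR0] using hD
  | t + 1, ht =>
    (hstep (t + 1) t.succ_pos ht).abs_min_sub_le (hemp (t + 1) t.succ_pos ht) hLlam
      (abs_runningMin_sub_le hD hLlam hR0 hemp hstep t (by omega))

end ShakyLadder

open ShakyLadder in
theorem shaky_ladder_lberr_general (k : ℕ) (E L lam : ℝ)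
    (hE : 0 ≤ E) (hL : 0 ≤ L) (hLlam : L ≤ lam / 4)
    (x r R : ℕ → ℝ)
    (hx : ∀ t, 0 ≤ x t ∧ x t ≤ 1)
    (hR0 : R 0 = 1)
    (hemp : ∀ t, 1 ≤ t → t ≤ k → |r t - x t| ≤ E)
    (hstep : ∀ t, 1 ≤ t → t ≤ k →
      (∃ e e' e'', |e| ≤ L ∧ |e'| ≤ L ∧ |e''| ≤ L ∧
        r t + e < R (t - 1) - lam + e' ∧ R t = r t + e'') ∨
      (R t = R (t - 1) ∧ ∃ e e', |e| ≤ L ∧ |e'| ≤ L ∧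
        R (t - 1) - lam + e' ≤ r t + e)) :
    ∀ t, ∀ h1 : 1 ≤ t, t ≤ k →
      |(Finset.Icc 1 t).inf' (Finset.nonempty_Icc.mpr h1) x - R t| ≤ E + lam + 2 * L := by
  intro t h1 ht
  rw [inf'_Icc_one_eq_runningMin (fun i => (hx i).2) h1]
  exact abs_runningMin_sub_le (by linarith) (by linarith) hR0 hemp hstep t ht

/-- Deterministic core of the leaderboard-error lemma for the Shaky Ladder.
`x t` is the population risk of the `t`-th model, `r t` its empirical risk
(accurate to within `E`), and `R t` the released estimate (`R 0 = 1`). At each step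
either the algorithm updates, releasing `R t = r t + noise` because the noisy
comparison `r t + e < R (t-1) - λ + e'` succeeded, or it keeps `R t = R (t-1)`
because the noisy comparison failed; all noise values are bounded by `L`.
Then the leaderboard error is at most `E + λ + 2L`:
`|min_{1 ≤ i ≤ t} x i - R t| ≤ E + λ + 2L` for all `1 ≤ t ≤ k`. -/
theorem shaky_ladder_lberr (k : ℕ) (E L lam : ℝ)
    (hE : 0 ≤ E) (hL : 0 ≤ L) (hlam : 0 < lam) (hLlam : L ≤ lam / 4)
    (x r R : ℕ → ℝ)
    (hx : ∀ t, 0 ≤ x t ∧ x t ≤ 1)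
    (hR0 : R 0 = 1)
    (hemp : ∀ t, 1 ≤ t → t ≤ k → |r t - x t| ≤ E)
    (hstep : ∀ t, 1 ≤ t → t ≤ k →
      (∃ e e' e'', |e| ≤ L ∧ |e'| ≤ L ∧ |e''| ≤ L ∧
        r t + e < R (t - 1) - lam + e' ∧ R t = r t + e'') ∨
      (R t = R (t - 1) ∧ ∃ e e', |e| ≤ L ∧ |e'| ≤ L ∧
        R (t - 1) - lam + e' ≤ r t + e)) :
    ∀ t, ∀ h1 : 1 ≤ t, t ≤ k →
      |(Finset.Icc 1 t).inf' (Finset.nonempty_Icc.mpr h1) x - R t| ≤ E + lam + 2 * L :=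
  shaky_ladder_lberr_general k E L lam hE hL hLlam x r R hx hR0 hemp hstep
end
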